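/- arXiv:2504.08988 — 2 statements merged into one kernel-verified Lean document; each statement's English description precedes it below -/
import Mathlib

section
/- Let f(θ) = Σ_{k=0}^{q} a_k·cos(kθ) with real coefficients a_0, …, a_q, and let m ∈ ℕ, m ≥ 1. Then Σ_{k=1}^{q} k^{m−1}·|a_k| ≤ 4·sup_{θ∈[0,2π]} |f^{(m)}(θ)|. -/
/-!
The `m`-th derivative of `f` is `∑ kᵐ aₖ cos (kθ + mπ/2)`, a cosine polynomial without constant
term. The functions `cos (kθ + c)`, `k ≥ 1`, are orthogonal on `[0, 2π]` with squared norm `π`, so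
Parseval gives `∑ (kᵐ aₖ)² ≤ 2 M²` for `M = sup |f⁽ᵐ⁾|`. Cauchy–Schwarz against `∑ 1/k² ≤ 2` then
yields `∑ k^(m-1) |aₖ| ≤ 2 M`.
-/

open Real intervalIntegral

lemma hasDerivAt_cos_mul_add (k c θ : ℝ) :
    HasDerivAt (fun t => cos (k * t + c)) (k * cos (k * θ + c + π / 2)) θ := by
  refine (((hasDerivAt_id θ).const_mul k).add_const c).cos.congr_deriv ?_
  rw [cos_add_pi_div_two, id]; ring

lemma iteratedDeriv_cos_mul (k : ℝ) (m : ℕ) :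
    iteratedDeriv m (fun t => cos (k * t)) = fun θ => k ^ m * cos (k * θ + m * (π / 2)) := by
  induction m with
  | zero => simp
  | succ n ih =>
    ext θ
    rw [iteratedDeriv_succ, ih, ((hasDerivAt_cos_mul_add k _ θ).const_mul _).deriv]
    push_cast
    ring_nf

lemma iteratedDeriv_sum_mul_cos (s : Finset ℕ) (a : ℕ → ℝ) (m : ℕ) :
    iteratedDeriv m (fun t => ∑ k ∈ s, a k * cos (k * t)) =
      fun θ => ∑ k ∈ s, a k * (k : ℝ) ^ m * cos (k * θ + m * (π / 2)) := by
  ext θ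
  rw [iteratedDeriv_fun_sum (fun k _ => by fun_prop)]
  refine Finset.sum_congr rfl fun k _ => ?_
  rw [iteratedDeriv_const_mul_field, iteratedDeriv_cos_mul, mul_assoc]

lemma integral_cos_int_mul_add {n : ℤ} (hn : n ≠ 0) (d : ℝ) :
    ∫ θ in (0)..(2 * π), cos (n * θ + d) = 0 := by
  rw [integral_comp_mul_add cos (Int.cast_ne_zero.mpr hn), integral_cos,
    mul_zero, zero_add, add_comm, sin_add_int_mul_two_pi, sub_self, smul_zero]

lemma integral_cos_mul_add_mul_cos_mul_add {j k : ℕ} (hk : k ≠ 0) (c : ℝ) :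
    ∫ θ in (0)..(2 * π), cos (j * θ + c) * cos (k * θ + c) = if j = k then π else 0 := by
  have h (θ : ℝ) : cos (j * θ + c) * cos (k * θ + c) =
      (cos ((j - k : ℤ) * θ + 0) + cos ((j + k : ℤ) * θ + 2 * c)) / 2 := by
    push_cast
    rw [show (j - k : ℝ) * θ + 0 = (j * θ + c) - (k * θ + c) by ring,
      show (j + k : ℝ) * θ + 2 * c = (j * θ + c) + (k * θ + c) by ring, ← two_mul_cos_mul_cos]
    ring
  simp_rw [h]
  rw [integral_div, integral_add (Continuous.intervalIntegrable (by fun_prop) _ _)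
    (Continuous.intervalIntegrable (by fun_prop) _ _),
    integral_cos_int_mul_add (by omega : (j + k : ℤ) ≠ 0)]
  split_ifs with hjk
  · subst hjk; simp
  · rw [integral_cos_int_mul_add (by omega : (j - k : ℤ) ≠ 0)]; simp

lemma integral_sq_sum_mul_cos {s : Finset ℕ} (hs : 0 ∉ s) (b : ℕ → ℝ) (c : ℝ) :
    ∫ θ in (0)..(2 * π), (∑ k ∈ s, b k * cos (k * θ + c)) ^ 2 = π * ∑ k ∈ s, b k ^ 2 := by
  have hterm (j k : ℕ) (hk : k ∈ s) :
      ∫ θ in (0)..(2 * π), b j * cos (j * θ + c) * (b k * cos (k * θ + c)) =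
        b j * b k * if j = k then π else 0 := by
    simp_rw [mul_mul_mul_comm]
    rw [integral_const_mul, integral_cos_mul_add_mul_cos_mul_add (ne_of_mem_of_not_mem hk hs)]
  simp_rw [sq, Finset.sum_mul_sum]
  rw [integral_finsetSum fun j _ => Continuous.intervalIntegrable (by fun_prop) _ _,
    Finset.mul_sum]
  refine Finset.sum_congr rfl fun j hj => ?_
  rw [integral_finsetSum fun k _ => Continuous.intervalIntegrable (by fun_prop) _ _,
    Finset.sum_congr rfl fun k hk => hterm j k hk]
  simp [hj]
  ring

lemma sum_sq_le_of_abs_sum_mul_cos_le {s : Finset ℕ} (hs : 0 ∉ s) {b : ℕ → ℝ} {c M : ℝ}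
    (hM : ∀ θ ∈ Set.Icc 0 (2 * π), |∑ k ∈ s, b k * cos (k * θ + c)| ≤ M) :
    ∑ k ∈ s, b k ^ 2 ≤ 2 * M ^ 2 := by
  have hint : π * ∑ k ∈ s, b k ^ 2 ≤ 2 * π * M ^ 2 := by
    calc π * ∑ k ∈ s, b k ^ 2
        = ∫ θ in (0)..(2 * π), (∑ k ∈ s, b k * cos (k * θ + c)) ^ 2 :=
          (integral_sq_sum_mul_cos hs b c).symm
      _ ≤ ∫ _ in (0)..(2 * π), M ^ 2 := by
          refine integral_mono_on two_pi_pos.le (Continuous.intervalIntegrable (by fun_prop) _ _)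
            intervalIntegrable_const fun θ hθ => ?_
          exact sq_le_sq' (abs_le.mp (hM θ hθ)).1 (abs_le.mp (hM θ hθ)).2
      _ = 2 * π * M ^ 2 := by simp
  nlinarith [pi_pos]

lemma sum_inv_sq_Icc_le_two (q : ℕ) : ∑ k ∈ Finset.Icc 1 q, ((k : ℝ) ^ 2)⁻¹ ≤ 2 := by
  have hIcc : Finset.Icc 1 q = Finset.Ioo 0 (q + 1) := by ext; simp; omega
  rw [hIcc]
  simpa using sum_Ioo_inv_sq_le (α := ℝ) 0 (q + 1)

lemma sum_abs_div_le_of_sum_sq_le {q : ℕ} {x : ℕ → ℝ} {M : ℝ} (hM : 0 ≤ M)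
    (hx : ∑ k ∈ Finset.Icc 1 q, x k ^ 2 ≤ 2 * M ^ 2) :
    ∑ k ∈ Finset.Icc 1 q, |x k| / k ≤ 2 * M := by
  have hcs := Finset.sum_mul_sq_le_sq_mul_sq (Finset.Icc 1 q) (fun k => (k : ℝ)⁻¹) (fun k => |x k|)
  simp only [inv_pow, sq_abs] at hcs
  refine (pow_le_pow_iff_left₀ (Finset.sum_nonneg fun k _ => by positivity) (by positivity)
    two_ne_zero).mp ?_
  calc (∑ k ∈ Finset.Icc 1 q, |x k| / k) ^ 2
      ≤ (∑ k ∈ Finset.Icc 1 q, ((k : ℝ) ^ 2)⁻¹) * ∑ k ∈ Finset.Icc 1 q, x k ^ 2 := by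
        simpa only [div_eq_inv_mul] using hcs
    _ ≤ 2 * (2 * M ^ 2) :=
        mul_le_mul (sum_inv_sq_Icc_le_two q) hx (Finset.sum_nonneg fun _ _ => sq_nonneg _)
          zero_le_two
    _ = (2 * M) ^ 2 := by ring

lemma le_sSup_image_abs_of_continuous {g : ℝ → ℝ} (hg : Continuous g) {a b θ : ℝ}
    (hθ : θ ∈ Set.Icc a b) : |g θ| ≤ sSup ((fun t => |g t|) '' Set.Icc a b) :=
  le_csSup (isCompact_Icc.bddAbove_image hg.abs.continuousOn) ⟨θ, hθ, rfl⟩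

theorem trig_poly_coeff_bound (q : ℕ) (a : ℕ → ℝ) (m : ℕ) (hm : 1 ≤ m) :
    ∑ k ∈ Finset.Icc 1 q, (k : ℝ) ^ (m - 1) * |a k| ≤
      4 * sSup ((fun θ =>
          |iteratedDeriv m (fun t => ∑ k ∈ Finset.range (q + 1), a k * Real.cos (k * t)) θ|) ''
        Set.Icc (0 : ℝ) (2 * Real.pi)) := by
  set f : ℝ → ℝ := fun t => ∑ k ∈ Finset.range (q + 1), a k * cos (k * t)
  set M := sSup ((fun θ => |iteratedDeriv m f θ|) '' Set.Icc 0 (2 * π))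
  have hderiv : iteratedDeriv m f =
      fun θ => ∑ k ∈ Finset.Icc 1 q, a k * (k : ℝ) ^ m * cos (k * θ + m * (π / 2)) := by
    rw [iteratedDeriv_sum_mul_cos]
    ext θ
    rw [Finset.range_eq_Ico, Finset.sum_eq_sum_Ico_succ_bot (Nat.succ_pos q), Nat.cast_zero,
      zero_pow (by omega : m ≠ 0), mul_zero, zero_mul, zero_add]
    rfl
  have hcont : Continuous (iteratedDeriv m f) := by rw [hderiv]; fun_prop
  have hbound (θ : ℝ) (hθ : θ ∈ Set.Icc 0 (2 * π)) : |iteratedDeriv m f θ| ≤ M :=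
    le_sSup_image_abs_of_continuous hcont hθ
  have hM : 0 ≤ M := (abs_nonneg _).trans (hbound 0 ⟨le_rfl, two_pi_pos.le⟩)
  rw [hderiv] at hbound
  calc ∑ k ∈ Finset.Icc 1 q, (k : ℝ) ^ (m - 1) * |a k|
      = ∑ k ∈ Finset.Icc 1 q, |a k * (k : ℝ) ^ m| / k := by
        refine Finset.sum_congr rfl fun k hk => ?_
        have hk : (k : ℝ) ≠ 0 := by simp at hk ⊢; omega
        rw [abs_mul, abs_pow, Nat.abs_cast, ← Nat.sub_add_cancel hm, pow_succ, Nat.add_sub_cancel]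
        field_simp
    _ ≤ 2 * M := sum_abs_div_le_of_sum_sq_le hM (sum_sq_le_of_abs_sum_mul_cos_le (by simp) hbound)
    _ ≤ 4 * M := by linarith
end

section
/- Let n, k ∈ ℕ with k ≥ 1 and let i, j : {1,…,k} → {1,…,n} be two index sequences. Then the average over a uniformly random permutation σ ∈ S_n of the product ∏_{ℓ=1}^{k} 1[σ(i_ℓ) = j_ℓ] equals 1/(n)_m if the sequences i and j induce the same set partition of {1,…,k} (i.e. for all a, b: i_a = i_b if and only if j_a = j_b), where m is the number of distinct values taken by i, and equals 0 otherwise. -/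
open scoped Classical

/-!
`Perm α` acts transitively on the embeddings `Q ↪ α` of a finite type, so the permutations
carrying one given embedding to another form a coset of a stabilizer, of size
`|α|! / |Q ↪ α| = |α|! / (|α|)_{|Q|}` by orbit–stabilizer. If `i` and `j` have the same kernel,
`σ ∘ i = j` says exactly that `σ` carries the embedding induced by `i` on the quotient of the
index set by that kernel to the one induced by `j`; otherwise no injective `σ` satisfies it.
-/

open Equiv Finset MulAction Nat

namespace MulAction

variable {G X : Type*} [Group G] [MulAction G X]

theorem card_smul_eq_eq_card_stabilizer {x y : X} {g : G} (hg : g • x = y) :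
    Nat.card {a : G // a • x = y} = Nat.card (stabilizer G x) :=
  Nat.card_congr
    { toFun a := ⟨g⁻¹ * a, by simp [mul_smul, a.2, ← hg]⟩
      invFun b := ⟨g * b, by rw [mul_smul, mem_stabilizer_iff.mp b.2, hg]⟩
      left_inv a := by simp
      right_inv b := by simp }

theorem card_smul_eq_mul_card [IsPretransitive G X] (x y : X) :
    Nat.card {a : G // a • x = y} * Nat.card X = Nat.card G := by
  obtain ⟨g, hg⟩ := exists_smul_eq G x y
  rw [card_smul_eq_eq_card_stabilizer hg, ← index_stabilizer_of_transitive G x,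
    Subgroup.card_mul_index]

end MulAction

namespace Quotient

variable {ι α : Type*} {r : Setoid ι}

def liftEmbedding (j : ι → α) (h : ∀ a b, r a b ↔ j a = j b) : Quotient r ↪ α where
  toFun := Quotient.lift j fun a b hab => (h a b).1 hab
  inj' := Quotient.ind₂ fun a b hab => Quotient.sound ((h a b).2 hab)

@[simp]
theorem liftEmbedding_mk (j : ι → α) (h : ∀ a b, r a b ↔ j a = j b) (a : ι) :
    liftEmbedding j h ⟦a⟧ = j a :=
  rfl

end Quotient

namespace Equiv.Perm

instance isPretransitive_embedding {ι β : Type*} [Finite ι] :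
    IsPretransitive (Perm β) (ι ↪ β) :=
  ⟨exists_smul_eq_embedding⟩

theorem card_smul_eq_mul_descFactorial {ι β : Type*} [Fintype ι] [Fintype β] (e f : ι ↪ β) :
    Nat.card {σ : Perm β // σ • e = f} * (Fintype.card β).descFactorial (Fintype.card ι) =
      (Fintype.card β)! := by
  rw [← Fintype.card_embedding_eq, ← Fintype.card_perm, ← Nat.card_eq_fintype_card,
    ← Nat.card_eq_fintype_card, card_smul_eq_mul_card]

variable {ι α : Type*} {i j : ι → α}

theorem eq_iff_eq_of_forall_apply_eq {σ : Perm α} (hσ : ∀ ℓ, σ (i ℓ) = j ℓ) (a b : ι) :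
    i a = i b ↔ j a = j b := by
  rw [← hσ a, ← hσ b, σ.apply_eq_iff_eq]

theorem card_forall_apply_eq_mul_descFactorial [Fintype ι] [Fintype α] [DecidableEq α]
    (h : ∀ a b, i a = i b ↔ j a = j b) :
    Nat.card {σ : Perm α // ∀ ℓ, σ (i ℓ) = j ℓ} *
        (Fintype.card α).descFactorial (Finset.univ.image i).card = (Fintype.card α)! := by
  let e : Quotient (Setoid.ker i) ↪ α := Quotient.liftEmbedding i fun _ _ => Iff.rfl
  let f : Quotient (Setoid.ker i) ↪ α := Quotient.liftEmbedding j h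
  have hfib : {σ : Perm α // ∀ ℓ, σ (i ℓ) = j ℓ} ≃ {σ : Perm α // σ • e = f} :=
    Equiv.subtypeEquivRight fun σ => by
      simp [Function.Embedding.ext_iff, Quotient.forall, e, f]
  have hcard : Fintype.card (Quotient (Setoid.ker i)) = (Finset.univ.image i).card := by
    rw [Fintype.card_congr (Setoid.quotientKerEquivRange i), ← Set.toFinset_card,
      Set.toFinset_range]
  rw [Nat.card_congr hfib, ← hcard, card_smul_eq_mul_descFactorial]

end Equiv.Perm

theorem symmetric_group_integration_formula_general (n k : ℕ) (i j : Fin k → Fin n) :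
    (∑ σ : Equiv.Perm (Fin n), ∏ ℓ : Fin k, (if σ (i ℓ) = j ℓ then (1 : ℝ) else 0)) /
        (Fintype.card (Equiv.Perm (Fin n)) : ℝ) =
      if ∀ a b : Fin k, i a = i b ↔ j a = j b then
        1 / (Nat.descFactorial n ((Finset.univ.image i).card) : ℝ)
      else 0 := by
  simp only [prod_boole, sum_boole, Fintype.card_perm, Fintype.card_fin, mem_univ, true_implies]
  split_ifs with h
  · have hcount := Equiv.Perm.card_forall_apply_eq_mul_descFactorial h
    rw [Nat.card_eq_fintype_card, Fintype.card_subtype, Fintype.card_fin] at hcount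
    have hpos : 0 < n.descFactorial (univ.image i).card :=
      Nat.descFactorial_pos.mpr ((card_le_univ _).trans_eq (Fintype.card_fin n))
    rw [div_eq_div_iff (by positivity) (by positivity), one_mul]
    exact_mod_cast hcount
  · rw [filter_false_of_mem fun σ _ hσ => h (Equiv.Perm.eq_iff_eq_of_forall_apply_eq hσ)]
    simp

theorem symmetric_group_integration_formula (n k : ℕ) (hk : 1 ≤ k) (i j : Fin k → Fin n) :
    (∑ σ : Equiv.Perm (Fin n), ∏ ℓ : Fin k, (if σ (i ℓ) = j ℓ then (1 : ℝ) else 0)) /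
        (Fintype.card (Equiv.Perm (Fin n)) : ℝ) =
      if ∀ a b : Fin k, i a = i b ↔ j a = j b then
        1 / (Nat.descFactorial n ((Finset.univ.image i).card) : ℝ)
      else 0 :=
  symmetric_group_integration_formula_general n k i j
end
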